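/- arXiv:2303.17950 — 3 statements merged into one kernel-verified Lean document; each statement's English description precedes it below -/
import Mathlib

section
/- For every ε > 0 there is a constant D_ε > 0 such that for every integer n ≥ 1 and every real R > 1, the number of matrices γ = [[a,b],[c,d]] in SL(2,ℤ) with γ ≡ I mod n, bc ≠ 0, and Euclidean norm ‖γ‖ = √(a²+b²+c²+d²) ≤ R is at most D_ε · (R^ε/n^ε) · (R²/n³ + R/n + 1). -/
/-!
Write `γ = [[a, b], [c, d]]`. The congruence `γ ≡ I mod n` gives `a ≡ 1 mod n`, `b = n k`,
`c = n l`, and `det γ = 1` gives `a d - 1 = n² k l`, which is nonzero since `b c ≠ 0`. Hence `γ`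
is determined by `(a, d, k)`. All entries are at most `R` in absolute value, so there are
`O(R/n + 1)` choices for `a`; then `d ≡ a⁻¹ mod n²` leaves `O(R/n² + 1)` choices for `d`; and `k`
is a divisor of `(a d - 1) / n² = O(R²/n²)`, so by the divisor bound `τ(m) = O(m^(ε/2))` there are
`O((R/n)^ε)` choices for `k`. Finally `(R/n + 1)(R/n² + 1) ≤ 2 (R²/n³ + R/n + 1)`.
-/

open Matrix

noncomputable def matNorm (γ : Matrix.SpecialLinearGroup (Fin 2) ℤ) : ℝ :=
  Real.sqrt (((γ 0 0 : ℤ) : ℝ) ^ 2 + ((γ 0 1 : ℤ) : ℝ) ^ 2 +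
    ((γ 1 0 : ℤ) : ℝ) ^ 2 + ((γ 1 1 : ℤ) : ℝ) ^ 2)

open Finset

lemma add_one_le_mul_pow {y : ℝ} (hy : 1 < y) (k : ℕ) :
    (k + 1 : ℝ) ≤ (1 / (y - 1) + 1) * y ^ k := by
  have hy' : 0 < y - 1 := by linarith
  have bernoulli : 1 + k * (y - 1) ≤ y ^ k := by
    simpa using one_add_mul_le_pow (a := y - 1) (by linarith) k
  calc (k + 1 : ℝ) ≤ (1 / (y - 1) + 1) * (1 + k * (y - 1)) := by
        field_simp
        nlinarith [mul_nonneg (Nat.cast_nonneg (α := ℝ) k) hy'.le]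
    _ ≤ (1 / (y - 1) + 1) * y ^ k := by gcongr

lemma add_one_le_pow {y : ℝ} (hy : 2 ≤ y) (k : ℕ) : (k + 1 : ℝ) ≤ y ^ k :=
  calc (k + 1 : ℝ) ≤ 2 ^ k := by exact_mod_cast Nat.lt_two_pow_self
    _ ≤ y ^ k := by gcongr

namespace Nat

theorem card_divisors_le_mul_rpow {ε : ℝ} (hε : 0 < ε) :
    ∃ C > 0, ∀ m : ℕ, (#m.divisors : ℝ) ≤ C * (m : ℝ) ^ ε := by
  set c : ℝ := 1 / (2 ^ ε - 1) + 1
  set N : ℕ := ⌈(2 : ℝ) ^ ε⁻¹⌉₊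
  have h2ε : 1 < (2 : ℝ) ^ ε := Real.one_lt_rpow (by norm_num) hε
  have hc : 1 ≤ c := le_add_of_nonneg_left (one_div_nonneg.2 (by linarith))
  -- `N ≥ 2 ^ (1 / ε)`, so `p ^ ε ≥ 2` as soon as `p ≥ N`
  have prime_power_bound : ∀ p, p.Prime → ∀ k : ℕ,
      (k + 1 : ℝ) ≤ (if p < N then c else 1) * ((p : ℝ) ^ ε) ^ k := by
    intro p hp k
    split_ifs with hpN
    · calc (k + 1 : ℝ) ≤ c * (2 ^ ε) ^ k := add_one_le_mul_pow h2ε k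
        _ ≤ c * ((p : ℝ) ^ ε) ^ k := by
          gcongr
          exact_mod_cast hp.two_le
    · rw [one_mul]
      refine add_one_le_pow ?_ k
      calc (2 : ℝ) = ((2 : ℝ) ^ ε⁻¹) ^ ε := by
            rw [← Real.rpow_mul (by norm_num), inv_mul_cancel₀ hε.ne', Real.rpow_one]
        _ ≤ (p : ℝ) ^ ε := by
          gcongr
          exact (Nat.le_ceil _).trans (by exact_mod_cast not_lt.1 hpN)
  refine ⟨c ^ N, by positivity, fun m => ?_⟩
  rcases eq_or_ne m 0 with rfl | hm
  · simp [Real.zero_rpow hε.ne']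
  have hm_rpow : (m : ℝ) ^ ε = ∏ p ∈ m.primeFactors, ((p : ℝ) ^ ε) ^ m.factorization p := by
    conv_lhs => rw [Nat.prod_primeFactors_pow_factorization hm]
    push_cast
    rw [← Real.finsetProd_rpow _ _ fun p _ => by positivity]
    exact prod_congr rfl fun p _ => (Real.rpow_pow_comm (by positivity) _ _).symm
  have small_primes : ∏ p ∈ m.primeFactors, (if p < N then c else 1) ≤ c ^ N := by
    rw [← prod_filter, prod_const]
    refine pow_le_pow_right₀ hc ((card_le_card fun p hp => ?_).trans (card_range N).le)
    simpa using (mem_filter.1 hp).2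
  rw [Nat.card_divisors hm, hm_rpow]
  push_cast
  calc ∏ p ∈ m.primeFactors, ((m.factorization p : ℝ) + 1)
      ≤ ∏ p ∈ m.primeFactors, (if p < N then c else 1) * ((p : ℝ) ^ ε) ^ m.factorization p :=
        prod_le_prod (fun _ _ => by positivity)
          fun p hp => prime_power_bound p (prime_of_mem_primeFactors hp) _
    _ ≤ c ^ N * ∏ p ∈ m.primeFactors, ((p : ℝ) ^ ε) ^ m.factorization p := by
        rw [prod_mul_distrib]
        gcongr

end Nat

namespace Int

lemma card_divisors (z : ℤ) : #z.divisors = 2 * #z.natAbs.divisors := by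
  rw [Int.divisors, card_disjUnion, card_map, card_map, two_mul]

lemma card_Ioc_filter_modEq_le {a b : ℤ} (hab : a ≤ b) (v : ℤ) {r : ℤ} (hr : 0 < r) :
    (#{x ∈ Ioc a b | x ≡ v [ZMOD r]} : ℝ) ≤ (b - a) / r + 1 := by
  have hr' : (0 : ℚ) < r := by exact_mod_cast hr
  have key : ((#{x ∈ Ioc a b | x ≡ v [ZMOD r]} : ℤ) : ℚ) ≤ (b - a) / r + 1 := by
    rw [Int.Ioc_filter_modEq_card _ _ hr]
    have h1 := Int.floor_le ((b - v) / (r : ℚ))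
    have h2 := Int.lt_floor_add_one ((a - v) / (r : ℚ))
    have h3 : (0 : ℚ) ≤ (b - a) / r := div_nonneg (by exact_mod_cast sub_nonneg.2 hab) hr'.le
    push_cast
    refine max_le ?_ (by linarith)
    simp only [sub_div] at h1 h2 h3 ⊢
    linarith
  exact_mod_cast key

lemma mem_Icc_neg_floor_floor {x : ℤ} {R : ℝ} : x ∈ Icc (-⌊R⌋) ⌊R⌋ ↔ |(x : ℝ)| ≤ R := by
  rw [mem_Icc, abs_le, neg_le, Int.le_floor, Int.le_floor]
  push_cast
  rw [neg_le]

lemma exists_filter_dvd_mul_sub_one_subset {a r : ℤ} (h : IsCoprime a r) (s : Finset ℤ) :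
    ∃ u, {d ∈ s | r ∣ a * d - 1} ⊆ {d ∈ s | d ≡ u [ZMOD r]} := by
  obtain ⟨u, v, huv⟩ := h
  refine ⟨u, monotone_filter_right s fun d _ ⟨w, hw⟩ =>
    Int.modEq_iff_dvd.2 ⟨-u * w - v * d, ?_⟩⟩
  linear_combination -u * hw + d * huv

lemma card_Icc_floor_filter_modEq_le {R : ℝ} (hR : 0 ≤ R) (v : ℤ) {r : ℤ} (hr : 0 < r) :
    (#{x ∈ Icc (-⌊R⌋) ⌊R⌋ | x ≡ v [ZMOD r]} : ℝ) ≤ 2 * R / r + 2 := by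
  have hIcc : Icc (-⌊R⌋) ⌊R⌋ = Ioc (-⌊R⌋ - 1) ⌊R⌋ := by
    ext
    simp only [mem_Icc, mem_Ioc]
    omega
  have hr1 : (1 : ℝ) ≤ r := by exact_mod_cast hr
  rw [hIcc]
  refine (card_Ioc_filter_modEq_le (by linarith [Int.floor_nonneg.2 hR]) v hr).trans ?_
  push_cast
  rw [show (⌊R⌋ : ℝ) - (-⌊R⌋ - 1) = 2 * ⌊R⌋ + 1 by ring, add_div, add_assoc]
  gcongr
  · exact Int.floor_le R
  · linarith [(div_le_one (by linarith)).2 hr1]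

lemma card_divisors_le_of_abs_le {C δ : ℝ} (hC0 : 0 ≤ C) (hδ : 0 ≤ δ)
    (hC : ∀ m : ℕ, (#m.divisors : ℝ) ≤ C * (m : ℝ) ^ δ) {z : ℤ} {B : ℝ}
    (hz : |(z : ℝ)| ≤ B) : (#z.divisors : ℝ) ≤ 2 * C * B ^ δ := by
  rw [card_divisors, Nat.cast_mul, Nat.cast_two, mul_assoc]
  gcongr
  refine (hC _).trans ?_
  gcongr
  rwa [Nat.cast_natAbs, Int.cast_abs]

end Int

namespace Matrix.SpecialLinearGroup

variable {R : Type*} [CommRing R]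

lemma det_fin_two_apply (γ : SpecialLinearGroup (Fin 2) R) :
    γ 0 0 * γ 1 1 - γ 0 1 * γ 1 0 = 1 := by
  have := γ.det_coe
  rwa [Matrix.det_fin_two] at this

lemma fin_two_ext_of_apply_zero_one_ne_zero [IsDomain R] {γ γ' : SpecialLinearGroup (Fin 2) R}
    (h00 : γ 0 0 = γ' 0 0) (h11 : γ 1 1 = γ' 1 1) (h01 : γ 0 1 = γ' 0 1) (hb : γ 0 1 ≠ 0) :
    γ = γ' := by
  have h10 : γ 1 0 = γ' 1 0 := by
    refine mul_left_cancel₀ hb ?_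
    linear_combination det_fin_two_apply γ' - det_fin_two_apply γ + γ 1 1 * h00 + γ' 0 0 * h11
      - γ' 1 0 * h01
  ext i j
  fin_cases i <;> fin_cases j <;> assumption

end Matrix.SpecialLinearGroup

lemma abs_apply_le_matNorm (γ : SpecialLinearGroup (Fin 2) ℤ) (i j : Fin 2) :
    |(γ i j : ℝ)| ≤ matNorm γ := by
  refine Real.abs_le_sqrt ?_
  have h i j := sq_nonneg (γ i j : ℝ)
  fin_cases i <;> fin_cases j <;> simp only [Fin.zero_eta, Fin.mk_one] <;>
    linarith [h 0 0, h 0 1, h 1 0, h 1 1]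

section Counting

variable (n : ℕ) (R : ℝ)

def gammaBall : Set (SpecialLinearGroup (Fin 2) ℤ) :=
  {γ | (∀ i j, (n : ℤ) ∣ (γ i j - (1 : Matrix.SpecialLinearGroup (Fin 2) ℤ) i j)) ∧
    γ 0 1 * γ 1 0 ≠ 0 ∧ matNorm γ ≤ R}

noncomputable def diagonalParams : Finset (Σ _ : ℤ, ℤ) :=
  {a ∈ Icc (-⌊R⌋) ⌊R⌋ | a ≡ 1 [ZMOD n]}.sigma
    fun a => {d ∈ Icc (-⌊R⌋) ⌊R⌋ | (n : ℤ) ^ 2 ∣ a * d - 1}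

/-- `γ = [[a, n k], [n l, d]]` is recorded as `⟨⟨a, d⟩, k⟩`, and `k` divides
`k l = (a d - 1) / n²`. -/
noncomputable def gammaBallParams : Finset (Σ _ : (Σ _ : ℤ, ℤ), ℤ) :=
  (diagonalParams n R).sigma fun p => ((p.1 * p.2 - 1) / n ^ 2).divisors

variable {n R}

lemma mk_mem_gammaBallParams {γ : SpecialLinearGroup (Fin 2) ℤ} (hγ : γ ∈ gammaBall n R) :
    (⟨⟨γ 0 0, γ 1 1⟩, γ 0 1 / n⟩ : Σ _ : (Σ _ : ℤ, ℤ), ℤ) ∈ gammaBallParams n R := by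
  obtain ⟨hcong, hbc, hnorm⟩ := hγ
  have hbox i j : γ i j ∈ Icc (-⌊R⌋) ⌊R⌋ :=
    Int.mem_Icc_neg_floor_floor.2 ((abs_apply_le_matNorm γ i j).trans hnorm)
  have ha : (n : ℤ) ∣ γ 0 0 - 1 := by simpa using hcong 0 0
  obtain ⟨k, hk⟩ : (n : ℤ) ∣ γ 0 1 := by simpa using hcong 0 1
  obtain ⟨l, hl⟩ : (n : ℤ) ∣ γ 1 0 := by simpa using hcong 1 0
  have hbc' : γ 0 1 * γ 1 0 = n ^ 2 * (k * l) := by rw [hk, hl]; ring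
  have had : γ 0 0 * γ 1 1 - 1 = n ^ 2 * (k * l) := by
    linear_combination SpecialLinearGroup.det_fin_two_apply γ + hbc'
  have hn2 : (n : ℤ) ^ 2 ≠ 0 := left_ne_zero_of_mul (hbc' ▸ hbc)
  have hn : (n : ℤ) ≠ 0 := ne_zero_pow two_ne_zero hn2
  simp only [gammaBallParams, diagonalParams, mem_sigma, mem_filter, Int.mem_divisors]
  rw [had, hk, Int.mul_ediv_cancel_left _ hn2, Int.mul_ediv_cancel_left _ hn]
  exact ⟨⟨⟨hbox 0 0, (Int.modEq_iff_dvd.2 ha).symm⟩, hbox 1 1, dvd_mul_right _ _⟩,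
    dvd_mul_right k l, right_ne_zero_of_mul (hbc' ▸ hbc)⟩

lemma injOn_gammaBall :
    (gammaBall n R).InjOn
      fun γ => (⟨⟨γ 0 0, γ 1 1⟩, γ 0 1 / n⟩ : Σ _ : (Σ _ : ℤ, ℤ), ℤ) := by
  intro γ hγ γ' hγ' h
  simp only [Sigma.mk.injEq, heq_eq_eq] at h
  obtain ⟨⟨h00, h11⟩, h01⟩ := h
  have hb : (n : ℤ) ∣ γ 0 1 := by simpa using hγ.1 0 1
  have hb' : (n : ℤ) ∣ γ' 0 1 := by simpa using hγ'.1 0 1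
  refine SpecialLinearGroup.fin_two_ext_of_apply_zero_one_ne_zero h00 h11 ?_
    (left_ne_zero_of_mul hγ.2.1)
  rw [← Int.mul_ediv_cancel' hb, ← Int.mul_ediv_cancel' hb', h01]

lemma ncard_gammaBall_le_card : (gammaBall n R).ncard ≤ #(gammaBallParams n R) := by
  rw [← Set.ncard_coe_finset]
  exact Set.ncard_le_ncard_of_injOn _ (fun γ hγ => mk_mem_gammaBallParams hγ) injOn_gammaBall
    (finite_toSet _)

lemma card_diagonalParams_le (hn : 1 ≤ n) (hR : 0 ≤ R) :
    (#(diagonalParams n R) : ℝ) ≤ (2 * R / n + 2) * (2 * R / n ^ 2 + 2) := by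
  have hn0 : (0 : ℤ) < n := by exact_mod_cast hn
  have card_fiber : ∀ a ∈ {a ∈ Icc (-⌊R⌋) ⌊R⌋ | a ≡ 1 [ZMOD n]},
      (#{d ∈ Icc (-⌊R⌋) ⌊R⌋ | (n : ℤ) ^ 2 ∣ a * d - 1} : ℝ) ≤ 2 * R / n ^ 2 + 2 := by
    intro a ha
    obtain ⟨t, ht⟩ := (Int.modEq_iff_dvd.1 (mem_filter.1 ha).2.symm)
    have hcop : IsCoprime a ((n : ℤ) ^ 2) :=
      IsCoprime.pow_right ⟨1, -t, by linear_combination ht⟩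
    obtain ⟨u, hu⟩ := Int.exists_filter_dvd_mul_sub_one_subset hcop (Icc (-⌊R⌋) ⌊R⌋)
    calc (#{d ∈ Icc (-⌊R⌋) ⌊R⌋ | (n : ℤ) ^ 2 ∣ a * d - 1} : ℝ)
        ≤ #{d ∈ Icc (-⌊R⌋) ⌊R⌋ | d ≡ u [ZMOD n ^ 2]} := by exact_mod_cast card_le_card hu
      _ ≤ 2 * R / n ^ 2 + 2 := by
        exact_mod_cast Int.card_Icc_floor_filter_modEq_le hR u (pow_pos hn0 2)
  rw [diagonalParams, card_sigma, Nat.cast_sum]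
  refine (sum_le_card_nsmul _ _ _ card_fiber).trans ?_
  rw [nsmul_eq_mul]
  gcongr
  exact_mod_cast Int.card_Icc_floor_filter_modEq_le hR 1 hn0

lemma card_gammaBallParams_le {C δ : ℝ} (hC0 : 0 ≤ C) (hδ : 0 ≤ δ)
    (hC : ∀ m : ℕ, (#m.divisors : ℝ) ≤ C * (m : ℝ) ^ δ) (hn : 1 ≤ n) (hR : 1 ≤ R) :
    (#(gammaBallParams n R) : ℝ) ≤
      (2 * R / n + 2) * (2 * R / n ^ 2 + 2) * (2 * C * (2 * R ^ 2 / n ^ 2) ^ δ) := by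
  have hn0 : (0 : ℝ) < n := by exact_mod_cast hn
  have card_fiber : ∀ p ∈ diagonalParams n R,
      (#((p.1 * p.2 - 1) / n ^ 2).divisors : ℝ) ≤ 2 * C * (2 * R ^ 2 / n ^ 2) ^ δ := by
    rintro ⟨a, d⟩ hp
    simp only [diagonalParams, mem_sigma, mem_filter, Int.mem_Icc_neg_floor_floor] at hp
    obtain ⟨⟨ha, -⟩, hd, hdvd⟩ := hp
    refine Int.card_divisors_le_of_abs_le hC0 hδ hC ?_
    rw [Int.cast_div hdvd (by push_cast; positivity)]
    push_cast
    rw [abs_div, abs_of_pos (by positivity : (0 : ℝ) < (n : ℝ) ^ 2)]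
    gcongr
    calc |(a : ℝ) * d - 1| ≤ |(a : ℝ)| * |(d : ℝ)| + 1 := by
          simpa [abs_mul] using abs_sub ((a : ℝ) * d) 1
      _ ≤ 2 * R ^ 2 := by nlinarith [mul_le_mul ha hd (abs_nonneg _) (by linarith)]
  rw [gammaBallParams, card_sigma, Nat.cast_sum]
  refine (sum_le_card_nsmul _ _ _ card_fiber).trans ?_
  rw [nsmul_eq_mul]
  gcongr
  exact card_diagonalParams_le hn (by linarith)

end Counting

lemma add_two_mul_add_two_le {n R : ℝ} (hn : 1 ≤ n) (hR : 0 ≤ R) :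
    (2 * R / n + 2) * (2 * R / n ^ 2 + 2) ≤ 8 * (R ^ 2 / n ^ 3 + R / n + 1) := by
  have hRn : R / n ^ 2 ≤ R / n := by gcongr; exact le_self_pow₀ hn two_ne_zero
  have hprod : R / n * (R / n ^ 2) = R ^ 2 / n ^ 3 := by field_simp
  calc (2 * R / n + 2) * (2 * R / n ^ 2 + 2)
      = 4 * (R / n * (R / n ^ 2) + R / n + R / n ^ 2 + 1) := by ring
    _ ≤ 8 * (R ^ 2 / n ^ 3 + R / n + 1) := by
        rw [hprod]
        linarith [div_nonneg (sq_nonneg R) (pow_nonneg (zero_le_one.trans hn) 3)]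

lemma two_mul_sq_div_sq_rpow {n R : ℝ} (hn : 0 ≤ n) (hR : 0 ≤ R) (ε : ℝ) :
    (2 * R ^ 2 / n ^ 2) ^ (ε / 2) = 2 ^ (ε / 2) * (R ^ ε / n ^ ε) := by
  rw [mul_div_assoc, ← div_pow, Real.mul_rpow (by norm_num) (by positivity),
    ← Real.rpow_natCast, ← Real.rpow_mul (by positivity), Real.div_rpow hR hn]
  norm_num [mul_div_cancel₀]

/-- Counting matrices in SL(2,ℤ) congruent to I mod n, with bc ≠ 0, of norm ≤ R. -/
theorem counting_SL2Z :
    ∀ ε : ℝ, 0 < ε → ∃ D : ℝ, 0 < D ∧ ∀ n : ℕ, 1 ≤ n → ∀ R : ℝ, 1 < R →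
      (Set.ncard {γ : Matrix.SpecialLinearGroup (Fin 2) ℤ |
          (∀ i j, (n : ℤ) ∣ (γ i j - (1 : Matrix.SpecialLinearGroup (Fin 2) ℤ) i j)) ∧
          γ 0 1 * γ 1 0 ≠ 0 ∧ matNorm γ ≤ R} : ℝ)
        ≤ D * (R ^ ε / (n : ℝ) ^ ε) * (R ^ 2 / (n : ℝ) ^ 3 + R / n + 1) := by
  intro ε hε
  obtain ⟨C, hC0, hC⟩ := Nat.card_divisors_le_mul_rpow (half_pos hε)
  refine ⟨16 * C * 2 ^ (ε / 2), by positivity, fun n hn R hR => ?_⟩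
  have hn' : (1 : ℝ) ≤ n := by exact_mod_cast hn
  calc ((gammaBall n R).ncard : ℝ)
      ≤ #(gammaBallParams n R) := by exact_mod_cast ncard_gammaBall_le_card
    _ ≤ (2 * R / n + 2) * (2 * R / n ^ 2 + 2) * (2 * C * (2 * R ^ 2 / n ^ 2) ^ (ε / 2)) :=
        card_gammaBallParams_le hC0.le (by positivity) hC hn hR.le
    _ ≤ 8 * (R ^ 2 / n ^ 3 + R / n + 1) * (2 * C * (2 ^ (ε / 2) * (R ^ ε / n ^ ε))) := by
        rw [two_mul_sq_div_sq_rpow (by positivity) (by positivity)]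
        exact mul_le_mul_of_nonneg_right (add_two_mul_add_two_le hn' (by positivity))
          (by positivity)
    _ = 16 * C * 2 ^ (ε / 2) * (R ^ ε / n ^ ε) * (R ^ 2 / n ^ 3 + R / n + 1) := by ring
end

section
/- Let p ≥ 5 be prime and a ≥ 1. Any complex irreducible representation of SL(2, ℤ/p^aℤ) that does not factor through the reduction map SL(2, ℤ/p^aℤ) → SL(2, ℤ/p^{a−1}ℤ) has dimension strictly greater than p^a/3. -/
/-!
Write `u` for the upper unipotent matrix with off-diagonal entry `1`.

If `ρ u ^ p ^ (a - 1) = 1`, then `ker ρ` is a normal subgroup containing every upper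
unipotent matrix with entry in `p ^ (a - 1) ℤ/p^aℤ`, the kernel of `ℤ/p^aℤ → ℤ/p^(a-1)ℤ`.
Over a local ring such matrices normally generate the kernel of the reduction map on `SL₂`
(via an `LDU` decomposition), and that reduction map is onto, so `ρ` factors through it.

Otherwise `ρ u`, being of finite order, is diagonalisable with an eigenvalue `ζ` of order
exactly `p ^ a`. Conjugating `u` by `diag(t, t⁻¹)` gives `u ^ t²`, so each `ζ ^ t²` with `t`
a unit is an eigenvalue too. These are pairwise distinct for distinct squares `t²`, and the
unit group is cyclic, so there are `φ(p ^ a) / 2` of them: the dimension is at least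
`p ^ (a - 1) (p - 1) / 2`, which exceeds `p ^ a / 3` because `p > 3`.
-/

open Matrix
open scoped MatrixGroups

theorem IsLocalRing.isUnit_or_eq_top_of_sub_one_mem {R : Type*} [CommRing R] [IsLocalRing R]
    {I : Ideal R} {x : R} (hx : x - 1 ∈ I) : IsUnit x ∨ I = ⊤ := by
  refine or_iff_not_imp_left.mpr fun hu ↦ I.eq_top_of_isUnit_mem ?_
    (IsLocalRing.isUnit_one_sub_self_of_mem_nonunits x hu)
  simpa using I.neg_mem hx

theorem MonoidHom.exists_eq_comp_of_ker_le {G H M : Type*} [Group G] [Group H] [Monoid M]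
    {π : G →* H} (hπ : Function.Surjective π) {ρ : G →* M} (h : π.ker ≤ ρ.ker) :
    ∃ ρ' : H →* M, ∀ g, ρ g = ρ' (π g) := by
  refine ⟨(QuotientGroup.lift π.ker ρ h).comp
    (QuotientGroup.quotientKerEquivOfSurjective π hπ).symm.toMonoidHom, fun g ↦ ?_⟩
  have : (QuotientGroup.quotientKerEquivOfSurjective π hπ).symm (π g) = g :=
    (MulEquiv.symm_apply_eq _).mpr rfl
  simp [this]

theorem IsCyclic.card_le_two_mul_card_range_powMonoidHom_two {G : Type*} [CommGroup G]
    [IsCyclic G] [Finite G] : Nat.card G ≤ 2 * Nat.card (powMonoidHom 2 : G →* G).range := by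
  rw [IsCyclic.card_powMonoidHom_range]
  calc Nat.card G = (Nat.card G).gcd 2 * (Nat.card G / (Nat.card G).gcd 2) :=
        (Nat.mul_div_cancel' (Nat.gcd_dvd_left _ _)).symm
    _ ≤ 2 * (Nat.card G / (Nat.card G).gcd 2) :=
        Nat.mul_le_mul_right _ (Nat.gcd_le_right _ two_pos)

namespace Module.End

variable {K V : Type*} [Field K] [AddCommGroup V] [Module K V]

theorem HasEigenvalue.pow_eq_one {f : End K V} {μ : K} {N : ℕ} (hf : f ^ N = 1)
    (hμ : f.HasEigenvalue μ) : μ ^ N = 1 := by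
  obtain ⟨v, hv⟩ := hμ.exists_hasEigenvector
  have h := hv.pow_apply N
  rw [hf, one_apply, eq_comm, ← one_smul K v, smul_smul, mul_one] at h
  exact smul_left_injective K hv.2 h

theorem isSemisimple_of_pow_eq_one {f : End K V} {N : ℕ} (hN : (N : K) ≠ 0) (hf : f ^ N = 1) :
    f.IsSemisimple := by
  refine isSemisimple_of_squarefree_aeval_eq_zero
    (Polynomial.separable_X_pow_sub_C (1 : K) hN one_ne_zero).squarefree ?_
  simp [hf]

variable [FiniteDimensional K V]

theorem card_eigenvalues_le_finrank (f : End K V) : Nat.card f.Eigenvalues ≤ finrank K V := by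
  have := f.eigenspaces_iSupIndep.fintypeNeBotOfFiniteDimensional
  exact (Nat.card_eq_fintype_card (α := {μ // f.eigenspace μ ≠ ⊥})).trans_le
    f.eigenspaces_iSupIndep.subtype_ne_bot_le_finrank

variable [IsAlgClosed K]

theorem IsSemisimple.pow_eq_one_of_forall_hasEigenvalue {f : End K V} (hf : f.IsSemisimple)
    {M : ℕ} (h : ∀ μ, f.HasEigenvalue μ → μ ^ M = 1) : f ^ M = 1 := by
  ext v
  have hv : v ∈ ⨆ μ, f.eigenspace μ := hf.iSup_eigenspace_eq_top ▸ Submodule.mem_top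
  refine Submodule.iSup_induction _ (motive := fun v ↦ (f ^ M) v = v) hv ?_ (map_zero _)
    fun x y hx hy ↦ by rw [map_add, hx, hy]
  intro μ w hw
  rcases eq_or_ne w 0 with rfl | hw0
  · exact map_zero _
  · have hvec : f.HasEigenvector μ w := ⟨hw, hw0⟩
    rw [hvec.pow_apply, h μ (hasEigenvalue_of_hasEigenvector hvec), one_smul]

theorem exists_hasEigenvalue_orderOf_eq {p n : ℕ} [Fact p.Prime] (hpK : (p : K) ≠ 0)
    {f : End K V} (hf : f ^ p ^ (n + 1) = 1) (hf' : f ^ p ^ n ≠ 1) :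
    ∃ ζ, f.HasEigenvalue ζ ∧ orderOf ζ = p ^ (n + 1) := by
  by_contra! h
  have hss : f.IsSemisimple :=
    isSemisimple_of_pow_eq_one (by rw [Nat.cast_pow]; exact pow_ne_zero _ hpK) hf
  refine hf' (hss.pow_eq_one_of_forall_hasEigenvalue fun μ hμ ↦ ?_)
  by_contra hμn
  exact h μ hμ (orderOf_eq_prime_pow hμn (hμ.pow_eq_one hf))

end Module.End

theorem Representation.hasEigenvalue_pow_of_conj {K G V : Type*} [Field K] [Group G]
    [AddCommGroup V] [Module K V] (ρ : Representation K G V) {g h : G} {n : ℕ}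
    (hconj : h * g * h⁻¹ = g ^ n) {μ : K} (hμ : Module.End.HasEigenvalue (ρ g) μ) :
    Module.End.HasEigenvalue (ρ g) (μ ^ n) := by
  obtain ⟨v, hv⟩ := hμ.exists_hasEigenvector
  have hg : g * h⁻¹ = h⁻¹ * g ^ n := by rw [← hconj]; group
  refine Module.End.hasEigenvalue_of_hasEigenvector (x := ρ h⁻¹ v) ⟨?_, fun h0 ↦ hv.2 ?_⟩
  · rw [Module.End.mem_eigenspace_iff, ← Module.End.mul_apply, ← map_mul, hg, map_mul,
      Module.End.mul_apply, map_pow, hv.pow_apply, map_smul]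
  · simpa using congrArg (ρ h) h0

namespace SL2

variable {R : Type*} [CommRing R]

def upper (x : R) : SL(2, R) := ⟨!![1, x; 0, 1], by simp [det_fin_two_of]⟩

def lower (x : R) : SL(2, R) := ⟨!![1, 0; x, 1], by simp [det_fin_two_of]⟩

def diag (u : Rˣ) : SL(2, R) := ⟨!![(u : R), 0; 0, ↑u⁻¹], by simp [det_fin_two_of]⟩

def weyl : SL(2, R) := ⟨!![0, 1; -1, 0], by simp [det_fin_two_of]⟩

@[simp] theorem coe_upper (x : R) : (upper x : Matrix (Fin 2) (Fin 2) R) = !![1, x; 0, 1] := rfl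
@[simp] theorem coe_lower (x : R) : (lower x : Matrix (Fin 2) (Fin 2) R) = !![1, 0; x, 1] := rfl
@[simp] theorem coe_diag (u : Rˣ) :
    (diag u : Matrix (Fin 2) (Fin 2) R) = !![(u : R), 0; 0, ↑u⁻¹] := rfl
@[simp] theorem coe_weyl : ((weyl : SL(2, R)) : Matrix (Fin 2) (Fin 2) R) = !![0, 1; -1, 0] := rfl

theorem upper_add (x y : R) : upper (x + y) = upper x * upper y := by
  ext i j
  fin_cases i <;> fin_cases j <;> simp [mul_apply, Fin.sum_univ_two, add_comm]

theorem upper_zero : upper (0 : R) = 1 := by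
  ext i j
  fin_cases i <;> fin_cases j <;> simp

theorem upper_natCast_mul (n : ℕ) (x : R) : upper (n * x) = upper x ^ n := by
  induction n with
  | zero => simp [upper_zero]
  | succ n ih => rw [pow_succ, ← ih, ← upper_add]; push_cast; ring_nf

theorem upper_inv (x : R) : (upper x)⁻¹ = upper (-x) :=
  inv_eq_of_mul_eq_one_right <| by rw [← upper_add, add_neg_cancel, upper_zero]

theorem weyl_conj_upper (x : R) : weyl * upper x * weyl⁻¹ = lower (-x) := by
  rw [mul_inv_eq_iff_eq_mul]
  ext i j
  fin_cases i <;> fin_cases j <;> simp [mul_apply, Fin.sum_univ_two]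

theorem weyl_eq_upper_mul_lower_mul_upper :
    (weyl : SL(2, R)) = upper 1 * lower (-1) * upper 1 := by
  ext i j
  fin_cases i <;> fin_cases j <;> simp [mul_apply, Fin.sum_univ_two]

theorem diag_conj_upper (u : Rˣ) (x : R) :
    diag u * upper x * (diag u)⁻¹ = upper (u * u * x) := by
  rw [mul_inv_eq_iff_eq_mul]
  ext i j
  fin_cases i <;> fin_cases j <;> simp [mul_apply, Fin.sum_univ_two]
  linear_combination (-(u : R) * x) * u.mul_inv

theorem eq_lower_mul_diag_mul_upper (A : SL(2, R)) (u : Rˣ) (hu : (u : R) = A 0 0) :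
    A = lower (A 1 0 * ↑u⁻¹) * diag u * upper (↑u⁻¹ * A 0 1) := by
  have hdet : A 0 0 * A 1 1 - A 0 1 * A 1 0 = 1 := by rw [← det_fin_two]; exact A.2
  have h : A 0 0 * ↑u⁻¹ = 1 := by rw [← hu]; exact u.mul_inv
  ext i j
  fin_cases i <;> fin_cases j <;> simp [mul_apply, Fin.sum_univ_two, ← hu]
  linear_combination ↑u⁻¹ * hdet - A 1 1 * h

theorem diag_eq_prod_elementary (g : Rˣ) :
    diag g = upper 1 * lower ((g : R) - 1) * upper (-1) * upper (((g : R) - 1) * ↑g⁻¹) *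
      lower (-(((g : R) - 1) * g)) := by
  have h := g.mul_inv
  ext i j
  fin_cases i <;> fin_cases j <;> simp [mul_apply, Fin.sum_univ_two]
  · linear_combination ((g : R) - 1) ^ 2 * g * h
  · linear_combination (1 - (g : R)) * h
  · linear_combination ((g : R) - 1) ^ 3 * h
  · linear_combination (2 - (g : R)) * h

section NormalSubgroup

variable {N : Subgroup SL(2, R)} [N.Normal] {I : Ideal R}

theorem lower_mem (hN : ∀ x ∈ I, upper x ∈ N) {x : R} (hx : x ∈ I) : lower x ∈ N := by
  simpa [weyl_conj_upper] using Subgroup.Normal.conj_mem ‹_› _ (hN (-x) (I.neg_mem hx)) weyl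

theorem diag_mem (hN : ∀ x ∈ I, upper x ∈ N) {g : Rˣ} (hg : (g : R) - 1 ∈ I) :
    diag g ∈ N := by
  have hconj : upper 1 * lower ((g : R) - 1) * upper (-1) ∈ N := by
    simpa [upper_inv] using Subgroup.Normal.conj_mem ‹_› _ (lower_mem hN hg) (upper 1)
  rw [diag_eq_prod_elementary]
  refine mul_mem (mul_mem hconj (hN _ (I.mul_mem_right _ hg))) (lower_mem hN ?_)
  exact I.neg_mem (I.mul_mem_right _ hg)

theorem mem_of_isUnit (hN : ∀ x ∈ I, upper x ∈ N) {A : SL(2, R)} (hA : IsUnit (A 0 0))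
    (h00 : A 0 0 - 1 ∈ I) (h01 : A 0 1 ∈ I) (h10 : A 1 0 ∈ I) : A ∈ N := by
  obtain ⟨u, hu⟩ := hA
  rw [eq_lower_mul_diag_mul_upper A u hu]
  refine mul_mem (mul_mem (lower_mem hN (I.mul_mem_right _ h10)) (diag_mem hN (hu ▸ h00)))
    (hN _ (I.mul_mem_left _ h01))

end NormalSubgroup

section IsLocalRing

variable [IsLocalRing R]

theorem isUnit_or_isUnit (A : SL(2, R)) : IsUnit (A 0 0) ∨ IsUnit (A 1 0) := by
  have hdet : A 0 0 * A 1 1 + -(A 0 1 * A 1 0) = 1 := by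
    rw [← sub_eq_add_neg, ← det_fin_two]; exact A.2
  refine (IsLocalRing.isUnit_or_isUnit_of_add_one hdet).imp isUnit_of_mul_isUnit_left ?_
  exact fun h ↦ isUnit_of_mul_isUnit_right (IsUnit.neg_iff _ |>.mp h)

theorem map_surjective {S : Type*} [CommRing S] {φ : R →+* S} (hφ : Function.Surjective φ) :
    Function.Surjective (SpecialLinearGroup.map φ : SL(2, R) →* SL(2, S)) := by
  intro B
  set A : Matrix (Fin 2) (Fin 2) R := of fun i j ↦ Function.surjInv hφ (B i j)
  have hAB : φ.mapMatrix A = B := by ext i j; simp [A, Function.surjInv_eq hφ]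
  have hdet : φ A.det = 1 := by rw [RingHom.map_det, hAB, B.2]
  rcases IsLocalRing.isUnit_or_eq_top_of_sub_one_mem (I := RingHom.ker φ) (x := A.det)
    (by simp [hdet]) with ⟨u, hu⟩ | htop
  · have hφu : φ ↑u⁻¹ = 1 :=
      calc φ ↑u⁻¹ = φ (↑u⁻¹ * A.det) := by rw [map_mul, hdet, mul_one]
        _ = 1 := by rw [← hu, u.inv_mul, map_one]
    have hdetA : (diagonal ![(↑u⁻¹ : R), 1] * A).det = 1 := by simp [← hu]
    refine ⟨⟨_, hdetA⟩, Subtype.ext ?_⟩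
    change φ.mapMatrix (diagonal _ * A) = B
    have hdiag : (fun m ↦ φ (![(↑u⁻¹ : R), 1] m)) = fun _ ↦ 1 := by
      ext m; fin_cases m <;> simp [hφu]
    rw [map_mul, hAB, RingHom.mapMatrix_apply, diagonal_map (map_zero φ), hdiag, diagonal_one,
      one_mul]
  · have : Subsingleton S := subsingleton_of_zero_eq_one <| by
      simpa using (htop ▸ Submodule.mem_top : (1 : R) ∈ RingHom.ker φ).symm
    exact ⟨1, Subtype.ext (Subsingleton.elim _ _)⟩

theorem eq_top_of_forall_upper_mem {N : Subgroup SL(2, R)} [N.Normal] (hN : ∀ x, upper x ∈ N) :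
    N = ⊤ := by
  have hN' : ∀ x ∈ (⊤ : Ideal R), upper x ∈ N := fun x _ ↦ hN x
  have hweyl : weyl ∈ N := by
    rw [weyl_eq_upper_mul_lower_mul_upper]
    exact mul_mem (mul_mem (hN 1) (lower_mem hN' Submodule.mem_top)) (hN 1)
  refine eq_top_iff.mpr fun A _ ↦ ?_
  rcases isUnit_or_isUnit A with h | h
  · exact mem_of_isUnit hN' h trivial trivial trivial
  · have hWA : weyl * A ∈ N := by
      refine mem_of_isUnit hN' ?_ trivial trivial trivial
      simpa [mul_apply, Fin.sum_univ_two] using h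
    simpa using mul_mem (inv_mem hweyl) hWA

theorem ker_map_le {N : Subgroup SL(2, R)} [N.Normal] {S : Type*} [CommRing S] (φ : R →+* S)
    (hN : ∀ x ∈ RingHom.ker φ, upper x ∈ N) : (SpecialLinearGroup.map φ).ker ≤ N := by
  intro A hA
  have hφ (i j : Fin 2) : φ (A i j) = (1 : Matrix (Fin 2) (Fin 2) S) i j := by
    simpa using congrArg (fun B : SL(2, S) ↦ (B : Matrix (Fin 2) (Fin 2) S) i j) hA
  have h00 : A 0 0 - 1 ∈ RingHom.ker φ := by simp [hφ]
  rcases IsLocalRing.isUnit_or_eq_top_of_sub_one_mem h00 with hu | htop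
  · exact mem_of_isUnit hN hu h00 (by simp [hφ]) (by simp [hφ])
  · rw [eq_top_of_forall_upper_mem fun x ↦ hN x (htop ▸ Submodule.mem_top)]
    trivial

end IsLocalRing

end SL2

theorem ZMod.isLocalRing_prime_pow {p a : ℕ} [Fact p.Prime] (ha : a ≠ 0) :
    IsLocalRing (ZMod (p ^ a)) :=
  have : Nontrivial (ZMod (p ^ a)) :=
    ZMod.nontrivial_iff.mpr (Nat.one_lt_pow ha (Fact.out : p.Prime).one_lt).ne'
  IsLocalRing.of_surjective' (PadicInt.toZModPow a) (ZMod.ringHom_surjective _)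

namespace SL2

variable {p a : ℕ} [Fact p.Prime]

theorem exists_factor_of_upper_pow_eq_one {M : Type*} [Monoid M] (ha : a ≠ 0)
    (ρ : SL(2, ZMod (p ^ a)) →* M) (h : ρ (upper 1) ^ p ^ (a - 1) = 1) :
    ∃ ρ' : SL(2, ZMod (p ^ (a - 1))) →* M, ∀ g, ρ g = ρ' (SpecialLinearGroup.map
      (ZMod.castHom (pow_dvd_pow p (Nat.sub_le a 1)) (ZMod (p ^ (a - 1)))) g) := by
  have := ZMod.isLocalRing_prime_pow (p := p) ha
  refine MonoidHom.exists_eq_comp_of_ker_le (map_surjective (ZMod.ringHom_surjective _))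
    (ker_map_le _ fun x hx ↦ ?_)
  rw [RingHom.mem_ker, ZMod.castHom_apply, ZMod.cast_eq_val, ZMod.natCast_eq_zero_iff] at hx
  obtain ⟨k, hk⟩ := hx
  have hxk : upper x = upper 1 ^ (p ^ (a - 1) * k) := by
    rw [← upper_natCast_mul, ← hk, mul_one, ZMod.natCast_zmod_val]
  rw [MonoidHom.mem_ker, hxk, map_pow, pow_mul, h, one_pow]

theorem totient_le_two_mul_finrank {K V : Type*} [Field K] [IsAlgClosed K] [AddCommGroup V]
    [Module K V] [FiniteDimensional K V] (hp2 : p ≠ 2) (hpK : (p : K) ≠ 0) (ha : a ≠ 0)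
    (ρ : Representation K SL(2, ZMod (p ^ a)) V) (h : ρ (upper 1) ^ p ^ (a - 1) ≠ 1) :
    (p ^ a).totient ≤ 2 * Module.finrank K V := by
  obtain ⟨n, rfl⟩ : ∃ n, a = n + 1 := ⟨a - 1, by omega⟩
  have := ZMod.isCyclic_units_of_prime_pow p Fact.out hp2 (n + 1)
  set f : Module.End K V := ρ (upper 1)
  have hf : f ^ p ^ (n + 1) = 1 := by
    rw [← map_pow, ← upper_natCast_mul, ZMod.natCast_self, zero_mul, upper_zero, map_one]
  obtain ⟨ζ, hζ, hord⟩ := Module.End.exists_hasEigenvalue_orderOf_eq hpK hf (by simpa using h)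
  set squares := (powMonoidHom 2 : (ZMod (p ^ (n + 1)))ˣ →* _).range
  have hsq : ∀ s ∈ squares, f.HasEigenvalue (ζ ^ (s : ZMod (p ^ (n + 1))).val) := by
    rintro _ ⟨t, rfl⟩
    refine ρ.hasEigenvalue_pow_of_conj (h := diag t) ?_ hζ
    rw [diag_conj_upper, ← upper_natCast_mul, ZMod.natCast_zmod_val]
    simp [sq]
  have hinj : Function.Injective fun s : squares ↦ (⟨_, hsq s s.2⟩ : f.Eigenvalues) := by
    intro s s' hss'
    have hval := pow_injOn_Iio_orderOf (x := ζ) (by simpa [hord] using ZMod.val_lt _)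
      (by simpa [hord] using ZMod.val_lt _) (congrArg Subtype.val hss')
    exact Subtype.ext (Units.ext (ZMod.val_injective _ hval))
  calc (p ^ (n + 1)).totient = Nat.card (ZMod (p ^ (n + 1)))ˣ := by
        rw [Nat.card_eq_fintype_card, ZMod.card_units_eq_totient]
    _ ≤ 2 * Nat.card squares :=
        IsCyclic.card_le_two_mul_card_range_powMonoidHom_two
    _ ≤ 2 * Nat.card f.Eigenvalues := Nat.mul_le_mul_left _ (Nat.card_le_card_of_injective _ hinj)
    _ ≤ 2 * Module.finrank K V := Nat.mul_le_mul_left _ f.card_eigenvalues_le_finrank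

end SL2

theorem dim_irrep_SL2_prime_power_general (p a : ℕ) (hp : p.Prime) (hp5 : 5 ≤ p) (ha : 1 ≤ a)
    (V : Type) [AddCommGroup V] [Module ℂ V] [FiniteDimensional ℂ V]
    (ρ : Representation ℂ (Matrix.SpecialLinearGroup (Fin 2) (ZMod (p ^ a))) V)
    (hnofactor : ¬ ∃ ρ' : Representation ℂ
        (Matrix.SpecialLinearGroup (Fin 2) (ZMod (p ^ (a - 1)))) V,
      ∀ g, ρ g = ρ' (Matrix.SpecialLinearGroup.map
        (ZMod.castHom (pow_dvd_pow p (Nat.sub_le a 1)) (ZMod (p ^ (a - 1)))) g)) :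
    ((p : ℝ) ^ a) / 3 < (Module.finrank ℂ V : ℝ) := by
  have : Fact p.Prime := ⟨hp⟩
  have ha0 : a ≠ 0 := by omega
  have hρ : ρ (SL2.upper 1) ^ p ^ (a - 1) ≠ 1 := fun h ↦
    hnofactor (SL2.exists_factor_of_upper_pow_eq_one ha0 ρ h)
  have hdim := SL2.totient_le_two_mul_finrank (by omega) (by exact_mod_cast hp.ne_zero) ha0 ρ hρ
  rw [Nat.totient_prime_pow hp (by omega)] at hdim
  have hpow : p ^ a = p ^ (a - 1) * p := by rw [← pow_succ, Nat.sub_add_cancel ha]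
  have hlt : p ^ a < 3 * Module.finrank ℂ V := by
    have hq : 0 < p ^ (a - 1) := pow_pos hp.pos _
    rw [hpow]
    nlinarith [Nat.sub_add_cancel hp.one_le]
  rw [div_lt_iff₀ (by norm_num), mul_comm]
  exact_mod_cast hlt

/-- An irreducible complex representation of SL(2, ℤ/p^aℤ) (p ≥ 5 prime, a ≥ 1) that does
not factor through the reduction SL(2, ℤ/p^aℤ) → SL(2, ℤ/p^{a-1}ℤ) has dimension > p^a/3. -/
theorem dim_irrep_SL2_prime_power (p a : ℕ) (hp : p.Prime) (hp5 : 5 ≤ p) (ha : 1 ≤ a)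
    (V : Type) [AddCommGroup V] [Module ℂ V] [FiniteDimensional ℂ V]
    (ρ : Representation ℂ (Matrix.SpecialLinearGroup (Fin 2) (ZMod (p ^ a))) V)
    (hirr : ∀ W : Submodule ℂ V,
      (∀ g, W.map (ρ g) ≤ W) → W = ⊥ ∨ W = ⊤)
    (hnofactor : ¬ ∃ ρ' : Representation ℂ
        (Matrix.SpecialLinearGroup (Fin 2) (ZMod (p ^ (a - 1)))) V,
      ∀ g, ρ g = ρ' (Matrix.SpecialLinearGroup.map
        (ZMod.castHom (pow_dvd_pow p (Nat.sub_le a 1)) (ZMod (p ^ (a - 1)))) g)) :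
    ((p : ℝ) ^ a) / 3 < (Module.finrank ℂ V : ℝ) :=
  dim_irrep_SL2_prime_power_general p a hp hp5 ha V ρ hnofactor
end

section
/- For every real δ ∈ (4/5, 1] and β ∈ (t_δ, δ], where t_δ = δ/6 + 2/3, there exist ε ∈ (0, 1) and α ∈ (2, 5) such that all three inequalities hold: α ≤ (1−ε)/(2+ε−2ℓ), α ≥ (1+ε)/(2ℓ−1−ε), and α ≥ (2+ε)/(2ℓ−δ), where ℓ = t_δ + (β − t_δ)/4. In particular all denominators appearing are strictly positive. -/
/-- Parameter choice: for δ ∈ (4/5, 1] and β ∈ (t_δ, δ] with t_δ = δ/6 + 2/3, there exist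
ε ∈ (0,1) and α ∈ (2,5) satisfying the three inequalities, with positive denominators,
where ℓ = t_δ + (β − t_δ)/4. -/
theorem parameter_choice (δ β : ℝ) (hδ1 : 4 / 5 < δ) (hδ2 : δ ≤ 1)
    (hβ1 : δ / 6 + 2 / 3 < β) (hβ2 : β ≤ δ) :
    ∃ ε α : ℝ, 0 < ε ∧ ε < 1 ∧ 2 < α ∧ α < 5 ∧
      (0 < 2 + ε - 2 * (δ / 6 + 2 / 3 + (β - (δ / 6 + 2 / 3)) / 4)) ∧
      (0 < 2 * (δ / 6 + 2 / 3 + (β - (δ / 6 + 2 / 3)) / 4) - 1 - ε) ∧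
      (0 < 2 * (δ / 6 + 2 / 3 + (β - (δ / 6 + 2 / 3)) / 4) - δ) ∧
      α ≤ (1 - ε) / (2 + ε - 2 * (δ / 6 + 2 / 3 + (β - (δ / 6 + 2 / 3)) / 4)) ∧
      (1 + ε) / (2 * (δ / 6 + 2 / 3 + (β - (δ / 6 + 2 / 3)) / 4) - 1 - ε) ≤ α ∧
      (2 + ε) / (2 * (δ / 6 + 2 / 3 + (β - (δ / 6 + 2 / 3)) / 4) - δ) ≤ α := by
  have hd : 0 < β - (δ / 6 + 2 / 3) := by linarith
  have hd' : β - (δ / 6 + 2 / 3) ≤ 1 / 6 := by linarith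
  refine ⟨(β - (δ / 6 + 2 / 3)) / 20,
    (1 - (β - (δ / 6 + 2 / 3)) / 20) /
      (2 + (β - (δ / 6 + 2 / 3)) / 20 - 2 * (δ / 6 + 2 / 3 + (β - (δ / 6 + 2 / 3)) / 4)),
    by positivity, by linarith, ?_, ?_, by linarith, by linarith, by linarith, le_refl _,
    ?_, ?_⟩
  · rw [lt_div_iff₀ (by linarith)]; nlinarith
  · rw [div_lt_iff₀ (by linarith)]; nlinarith
  · rw [div_le_div_iff₀ (by linarith) (by linarith)]; nlinarith
  · rw [div_le_div_iff₀ (by linarith) (by linarith)]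
    nlinarith [sq_nonneg (β - (δ / 6 + 2 / 3)), mul_pos hd hd]
end
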